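/- arXiv:2004.08488 — 4 statements merged into one kernel-verified Lean document; each statement's English description precedes it below -/
import Mathlib

section
/- Let μ > 0 and for each C with 0 < C < μ let Φ(C) = {φ ∈ (0,1) : φ = exp(−μ(1−φ)/C)} denote the set of fixed points of φ ↦ exp(−μ(1−φ)/C) in (0,1) (which is nonempty). Then the smallest fixed point is monotone in C: for 0 < C₁ ≤ C₂ < μ, one has inf Φ(C₁) ≤ inf Φ(C₂). In particular, the quantity φ(C) in the paper's capacity-selection rule is an increasing function of the capacity C. -/
/-- If `g C b ≤ b` for some `b ∈ (0,1)`, then there is a fixed point `≤ b`. -/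
lemma aux_exists_fp (μ : ℝ) (hμ : 0 < μ) (C : ℝ) (hC : 0 < C) (b : ℝ)
    (hb0 : 0 < b) (hb1 : b < 1) (hgb : Real.exp (-μ * (1 - b) / C) ≤ b) :
    ∃ φ, (φ ∈ Set.Ioo (0 : ℝ) 1 ∧ φ = Real.exp (-μ * (1 - φ) / C)) ∧ φ ≤ b := by
  set h : ℝ → ℝ := fun φ => Real.exp (-μ * (1 - φ) / C) - φ with hh
  have hcont : ContinuousOn h (Set.Icc 0 b) := by
    apply Continuous.continuousOn
    continuity
  have hIVT := intermediate_value_Icc' (le_of_lt hb0) hcont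
  have h0 : (0 : ℝ) ∈ Set.Icc (h b) (h 0) := by
    constructor
    · simpa [hh] using hgb
    · have := Real.exp_pos (-μ * (1 - (0:ℝ)) / C)
      simp only [hh]
      linarith
  obtain ⟨φ, hφmem, hφ⟩ := hIVT h0
  have hfix : φ = Real.exp (-μ * (1 - φ) / C) := by
    simp only [hh] at hφ; linarith
  have hφpos : 0 < φ := by rw [hfix]; exact Real.exp_pos _
  exact ⟨φ, ⟨⟨hφpos, lt_of_le_of_lt hφmem.2 hb1⟩, hfix⟩, hφmem.2⟩

/-- Existence of a point `b ∈ (0,1)` with `g C b ≤ b` when `C < μ`. -/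
lemma aux_exists_b (μ : ℝ) (hμ : 0 < μ) (C : ℝ) (hC : 0 < C) (hCμ : C < μ) :
    ∃ b, 0 < b ∧ b < 1 ∧ Real.exp (-μ * (1 - b) / C) ≤ b := by
  set a : ℝ := μ / C with ha
  have ha1 : 1 < a := (one_lt_div hC).mpr hCμ
  set t : ℝ := (a - 1) / (2 * a) with ht
  have ht0 : 0 < t := div_pos (by linarith) (by linarith)
  have ht2 : t < 1 / 2 := by
    rw [ht, div_lt_iff₀ (by linarith)]; nlinarith
  refine ⟨1 - t, by linarith, by linarith, ?_⟩
  have harg : -μ * (1 - (1 - t)) / C = -(a * t) := by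
    rw [ha]; field_simp; ring
  rw [harg, Real.exp_neg]
  have hE : 1 + a * t ≤ Real.exp (a * t) := by
    have := Real.add_one_le_exp (a * t); linarith
  have hat : a * t = (a - 1) / 2 := by
    rw [ht]; field_simp
  have hEpos : (0 : ℝ) < Real.exp (a * t) := Real.exp_pos _
  rw [inv_le_iff_one_le_mul₀ hEpos]
  nlinarith [hE, ht0, ha1]

/-- **Monotonicity of the smallest fixed point in the capacity.**
For service rate `μ > 0` and arrival rates `0 < C₁ ≤ C₂ < μ`, the smallest
fixed point in `(0,1)` of `φ ↦ exp (-μ * (1 - φ) / C)` is monotone in `C`: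
`inf Φ(C₁) ≤ inf Φ(C₂)`, where `Φ(C)` is the (nonempty) set of such
fixed points. -/
theorem stmt_2 (μ : ℝ) (hμ : 0 < μ)
    (Φ : ℝ → Set ℝ)
    (hΦ : ∀ C, Φ C = {φ : ℝ | φ ∈ Set.Ioo (0 : ℝ) 1 ∧ φ = Real.exp (-μ * (1 - φ) / C)})
    (C₁ C₂ : ℝ) (hC₁ : 0 < C₁) (h12 : C₁ ≤ C₂) (hC₂ : C₂ < μ) :
    (Φ C₁).Nonempty ∧ (Φ C₂).Nonempty ∧ sInf (Φ C₁) ≤ sInf (Φ C₂) := by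
  have hC₂0 : 0 < C₂ := lt_of_lt_of_le hC₁ h12
  have hC₁μ : C₁ < μ := lt_of_le_of_lt h12 hC₂
  -- nonemptiness
  have hne : ∀ C, 0 < C → C < μ → (Φ C).Nonempty := by
    intro C hC hCμ
    obtain ⟨b, hb0, hb1, hgb⟩ := aux_exists_b μ hμ C hC hCμ
    obtain ⟨φ, hφ, -⟩ := aux_exists_fp μ hμ C hC b hb0 hb1 hgb
    exact ⟨φ, (hΦ C) ▸ hφ⟩
  have hne1 := hne C₁ hC₁ hC₁μ
  have hne2 := hne C₂ hC₂0 hC₂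
  refine ⟨hne1, hne2, ?_⟩
  have hbdd : BddBelow (Φ C₁) := by
    refine ⟨0, fun x hx => ?_⟩
    rw [hΦ C₁] at hx
    exact le_of_lt hx.1.1
  apply le_csInf hne2
  intro φ₂ hφ₂
  rw [hΦ C₂] at hφ₂
  obtain ⟨⟨hφ₂0, hφ₂1⟩, hfix₂⟩ := hφ₂
  -- g_{C₁} φ₂ ≤ g_{C₂} φ₂ = φ₂
  have hmono : Real.exp (-μ * (1 - φ₂) / C₁) ≤ Real.exp (-μ * (1 - φ₂) / C₂) := by
    apply Real.exp_le_exp.mpr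
    rw [div_le_div_iff₀ hC₁ hC₂0]
    nlinarith [mul_nonneg (mul_nonneg hμ.le (by linarith : (0:ℝ) ≤ 1 - φ₂))
      (by linarith : (0:ℝ) ≤ C₂ - C₁)]
  have hgb : Real.exp (-μ * (1 - φ₂) / C₁) ≤ φ₂ := by
    calc Real.exp (-μ * (1 - φ₂) / C₁) ≤ Real.exp (-μ * (1 - φ₂) / C₂) := hmono
    _ = φ₂ := hfix₂.symm
  obtain ⟨ψ, hψ, hψle⟩ := aux_exists_fp μ hμ C₁ hC₁ φ₂ hφ₂0 hφ₂1 hgb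
  calc sInf (Φ C₁) ≤ ψ := csInf_le hbdd ((hΦ C₁) ▸ hψ)
  _ ≤ φ₂ := hψle
end

section
/- Let n ≥ 1 be an integer and let D, c, c', γ > 0 (with c' = c_{n+1} + c_t the combined offload cost), and define the total cost Φ(r, s) = n(1 − r − s)Dc + n s D c' + nγ/√((1 − r − s)D) + γ/√(s n D), defined for r ≥ 0, s > 0, r + s < 1. Fix s ∈ (0,1) and suppose D is large enough that 0 ≤ 1 − (1/D)(γ/(2c))^{2/3} − s. Then the function r ↦ Φ(r, s) on the set {r : 0 ≤ r, r + s < 1} attains its minimum at the unique point r*(s) = 1 − (1/D)(γ/(2c))^{2/3} − s, and r*(s) is the only critical point of this function. -/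
/-- Key algebraic inequality: for `γ = 2c·X√X`, the function `x ↦ cx + γ/√x`
on positives is minimized strictly at `X`. -/
lemma stmt4_key (c γ x X : ℝ) (hc : 0 < c) (hx : 0 < x) (hX : 0 < X)
    (hγ : γ = 2 * c * (X * Real.sqrt X)) :
    c * X + γ / Real.sqrt X ≤ c * x + γ / Real.sqrt x ∧
    (c * x + γ / Real.sqrt x ≤ c * X + γ / Real.sqrt X → x = X) := by
  set a := Real.sqrt x with ha
  set b := Real.sqrt X with hb
  have ha0 : 0 < a := Real.sqrt_pos.2 hx
  have hb0 : 0 < b := Real.sqrt_pos.2 hX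
  have hxa : x = a ^ 2 := (Real.sq_sqrt hx.le).symm
  have hXb : X = b ^ 2 := (Real.sq_sqrt hX.le).symm
  have hdiff : c * x + γ / a - (c * X + γ / b)
      = c * (a - b) ^ 2 * (a + 2 * b) / a := by
    rw [hγ, hxa, hXb]
    field_simp
    ring
  have hnn : 0 ≤ c * (a - b) ^ 2 * (a + 2 * b) / a := by positivity
  constructor
  · linarith [hdiff]
  · intro h
    have hab : a = b := by
      by_contra hne
      have h2 : 0 < (a - b) ^ 2 :=
        lt_of_le_of_ne (sq_nonneg _) (Ne.symm (pow_ne_zero 2 (sub_ne_zero.2 hne)))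
      have : 0 < c * (a - b) ^ 2 * (a + 2 * b) / a := by positivity
      linarith [hdiff]
    rw [hxa, hXb, hab]

/-- Strict monotonicity of `t ↦ t√t` on positives. -/
lemma stmt4_mono {p q : ℝ} (hp : 0 < p) (hq : 0 < q) (h : p < q) :
    p * Real.sqrt p < q * Real.sqrt q := by
  have hs : Real.sqrt p < Real.sqrt q := Real.sqrt_lt_sqrt hp.le h
  have hsp : 0 < Real.sqrt p := Real.sqrt_pos.2 hp
  exact mul_lt_mul h hs.le hsp hq.le

/-- **Optimal discard fraction with nonlinear error costs (part of Theorem 4).**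
For the cost `Φ(r,s) = n(1−r−s)Dc + nsDc' + nγ/√((1−r−s)D) + γ/√(snD)` and
fixed `s ∈ (0,1)`, if `D` is large enough that
`0 ≤ 1 − (1/D)(γ/(2c))^{2/3} − s`, then `r ↦ Φ(r,s)` on `{r | 0 ≤ r, r+s < 1}`
attains its minimum at the unique point
`r*(s) = 1 − (1/D)(γ/(2c))^{2/3} − s`, which is also its only critical point. -/
theorem stmt_4 (n : ℕ) (hn : 1 ≤ n) (D c c' γ : ℝ)
    (hD : 0 < D) (hc : 0 < c) (hc' : 0 < c') (hγ : 0 < γ)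
    (Φ : ℝ → ℝ → ℝ)
    (hΦ : ∀ r s, Φ r s = (n : ℝ) * (1 - r - s) * D * c + (n : ℝ) * s * D * c'
        + (n : ℝ) * γ / Real.sqrt ((1 - r - s) * D) + γ / Real.sqrt (s * (n : ℝ) * D))
    (s : ℝ) (hs : s ∈ Set.Ioo (0 : ℝ) 1)
    (rstar : ℝ) (hrstar : rstar = 1 - (1 / D) * (γ / (2 * c)) ^ ((2 : ℝ) / 3) - s)
    (hDlarge : 0 ≤ rstar)
    (A : Set ℝ) (hA : A = {r : ℝ | 0 ≤ r ∧ r + s < 1}) :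
    rstar ∈ A ∧
    (∀ r ∈ A, Φ rstar s ≤ Φ r s) ∧
    (∀ r ∈ A, Φ r s ≤ Φ rstar s → r = rstar) ∧
    (∀ r ∈ A, deriv (fun r' => Φ r' s) r = 0 ↔ r = rstar) := by
  obtain ⟨hs0, hs1⟩ := hs
  set q : ℝ := γ / (2 * c) with hqdef
  have hq : 0 < q := by positivity
  set X : ℝ := q ^ ((2 : ℝ) / 3) with hXdef
  have hX : 0 < X := Real.rpow_pos_of_pos hq _
  -- X * √X = γ / (2c)
  have hX32 : X * Real.sqrt X = q := by
    rw [hXdef, Real.sqrt_eq_rpow, ← Real.rpow_mul hq.le, ← Real.rpow_add hq]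
    norm_num
  have hγX : γ = 2 * c * (X * Real.sqrt X) := by
    rw [hX32, hqdef]; field_simp
  -- rstar ∈ A
  have hrs1 : rstar + s < 1 := by
    rw [hrstar]
    have : 0 < (1 / D) * X := by positivity
    linarith
  have hrA : rstar ∈ A := by rw [hA]; exact ⟨hDlarge, hrs1⟩
  -- (1 - rstar - s) * D = X
  have hXeq : (1 - rstar - s) * D = X := by
    rw [hrstar]
    field_simp
    ring
  refine ⟨hrA, ?_, ?_, ?_⟩
  · -- minimality
    intro r hr
    rw [hA] at hr
    obtain ⟨hr0, hr1⟩ := hr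
    have hx : 0 < (1 - r - s) * D := mul_pos (by linarith) hD
    have key := (stmt4_key c γ ((1 - r - s) * D) X hc hx hX hγX).1
    have hkey : (n : ℝ) * (c * X + γ / Real.sqrt X)
        ≤ (n : ℝ) * (c * ((1 - r - s) * D) + γ / Real.sqrt ((1 - r - s) * D)) :=
      mul_le_mul_of_nonneg_left key (by positivity)
    rw [hΦ, hΦ, hXeq]
    have e1 : (n : ℝ) * (1 - r - s) * D * c + (n : ℝ) * γ / Real.sqrt ((1 - r - s) * D)
        = (n : ℝ) * (c * ((1 - r - s) * D) + γ / Real.sqrt ((1 - r - s) * D)) := by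
      ring
    have e2 : (n : ℝ) * (1 - rstar - s) * D * c + (n : ℝ) * γ / Real.sqrt X
        = (n : ℝ) * (c * ((1 - rstar - s) * D) + γ / Real.sqrt X) := by ring
    rw [hXeq] at e2
    linarith
  · -- uniqueness of minimizer
    intro r hr hle
    rw [hA] at hr
    obtain ⟨hr0, hr1⟩ := hr
    have hx : 0 < (1 - r - s) * D := mul_pos (by linarith) hD
    have key := (stmt4_key c γ ((1 - r - s) * D) X hc hx hX hγX).2
    have hn0 : (0 : ℝ) < (n : ℝ) := by exact_mod_cast hn
    rw [hΦ, hΦ, hXeq] at hle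
    have e1 : (n : ℝ) * (1 - r - s) * D * c + (n : ℝ) * γ / Real.sqrt ((1 - r - s) * D)
        = (n : ℝ) * (c * ((1 - r - s) * D) + γ / Real.sqrt ((1 - r - s) * D)) := by
      ring
    have e2 : (n : ℝ) * (1 - rstar - s) * D * c + (n : ℝ) * γ / Real.sqrt X
        = (n : ℝ) * (c * ((1 - rstar - s) * D) + γ / Real.sqrt X) := by ring
    rw [hXeq] at e2
    have hle' : c * ((1 - r - s) * D) + γ / Real.sqrt ((1 - r - s) * D)
        ≤ c * X + γ / Real.sqrt X := by
      have : (n : ℝ) * (c * ((1 - r - s) * D) + γ / Real.sqrt ((1 - r - s) * D))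
          ≤ (n : ℝ) * (c * X + γ / Real.sqrt X) := by linarith
      exact le_of_mul_le_mul_left this hn0
    have hxX : (1 - r - s) * D = X := key hle'
    have : (1 - r - s) * D = (1 - rstar - s) * D := by rw [hxX, hXeq]
    have := mul_right_cancel₀ (ne_of_gt hD) this
    linarith
  · -- critical points
    intro r hr
    rw [hA] at hr
    obtain ⟨hr0, hr1⟩ := hr
    set u : ℝ := (1 - r - s) * D with hudef
    have hu : 0 < u := mul_pos (by linarith) hD
    have hsu : 0 < Real.sqrt u := Real.sqrt_pos.2 hu
    -- derivative computation
    have h1 : HasDerivAt (fun r' : ℝ => 1 - r' - s) (-1) r := by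
      simpa using ((hasDerivAt_id r).const_sub 1).sub_const s
    have hud : HasDerivAt (fun r' : ℝ => (1 - r' - s) * D) (-D) r := by
      simpa using h1.mul_const D
    have hsq : HasDerivAt (fun r' : ℝ => Real.sqrt ((1 - r' - s) * D))
        (-D / (2 * Real.sqrt u)) r := by
      have := (Real.hasDerivAt_sqrt (ne_of_gt hu)).comp r hud
      refine this.congr_deriv (Eq.symm ?_)
      ring
    have hinv : HasDerivAt (fun r' : ℝ => (Real.sqrt ((1 - r' - s) * D))⁻¹)
        (D / (2 * (u * Real.sqrt u))) r := by
      have := hsq.inv (ne_of_gt hsu)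
      refine this.congr_deriv (Eq.symm ?_)
      rw [← hudef, Real.sq_sqrt hu.le]
      have habs : ∀ v w : ℝ, v ≠ 0 → w ≠ 0 → -(-D / (2 * w)) / v = D / (2 * (v * w)) := by
        intro v w hv hw
        field_simp
      exact (habs u (Real.sqrt u) (ne_of_gt hu) (ne_of_gt hsu)).symm
    have hA1 : HasDerivAt (fun r' : ℝ => (n : ℝ) * (1 - r' - s) * D * c)
        (-((n : ℝ) * D * c)) r := by
      have := ((h1.const_mul (n : ℝ)).mul_const D).mul_const c
      refine this.congr_deriv (Eq.symm ?_)
      ring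
    have hA3 : HasDerivAt (fun r' : ℝ => (n : ℝ) * γ / Real.sqrt ((1 - r' - s) * D))
        ((n : ℝ) * γ * (D / (2 * (u * Real.sqrt u)))) r := by
      simpa [div_eq_mul_inv] using hinv.const_mul ((n : ℝ) * γ)
    have hF : HasDerivAt (fun r' => Φ r' s)
        (-((n : ℝ) * D * c) + (n : ℝ) * γ * (D / (2 * (u * Real.sqrt u)))) r := by
      have hfun : (fun r' => Φ r' s) = fun r' =>
          ((n : ℝ) * (1 - r' - s) * D * c + (n : ℝ) * s * D * c')
          + (n : ℝ) * γ / Real.sqrt ((1 - r' - s) * D)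
          + γ / Real.sqrt (s * (n : ℝ) * D) := by
        funext r'
        rw [hΦ]
      rw [hfun]
      simpa using ((hA1.add_const ((n : ℝ) * s * D * c')).add hA3).add_const
        (γ / Real.sqrt (s * (n : ℝ) * D))
    rw [hF.deriv]
    have hn0 : (0 : ℝ) < (n : ℝ) := by exact_mod_cast hn
    -- r = rstar ↔ u = X
    have hruX : r = rstar ↔ u = X := by
      constructor
      · intro h; rw [hudef, h, hXeq]
      · intro h
        have : (1 - r - s) * D = (1 - rstar - s) * D := by rw [← hudef, h, hXeq]
        have := mul_right_cancel₀ (ne_of_gt hD) this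
        linarith
    rw [hruX]
    constructor
    · intro h0
      -- -nDc + nγD/(2 u√u) = 0  →  u√u = X√X  →  u = X
      have hwne : (2 * (u * Real.sqrt u)) ≠ 0 := by positivity
      have h2 : (n : ℝ) * γ * D / (2 * (u * Real.sqrt u)) = (n : ℝ) * D * c := by
        rw [mul_div_assoc]
        linarith
      have h0' : (n : ℝ) * γ * D = (n : ℝ) * D * c * (2 * (u * Real.sqrt u)) :=
        (div_eq_iff hwne).mp h2
      have hγ2 : γ = 2 * c * (u * Real.sqrt u) := by
        have hnD : ((n : ℝ) * D) ≠ 0 := by positivity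
        have hh : ((n : ℝ) * D) * γ = ((n : ℝ) * D) * (2 * c * (u * Real.sqrt u)) := by
          linear_combination h0'
        exact mul_left_cancel₀ hnD hh
      have husu : u * Real.sqrt u = X * Real.sqrt X := by
        have h2c : ((2 : ℝ) * c) ≠ 0 := by positivity
        have hh : (2 * c) * (u * Real.sqrt u) = (2 * c) * (X * Real.sqrt X) := by
          linear_combination hγ2.symm.trans hγX
        exact mul_left_cancel₀ h2c hh
      rcases lt_trichotomy u X with h | h | h
      · exact absurd (stmt4_mono hu hX h) (by rw [husu]; exact lt_irrefl _)
      · exact h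
      · exact absurd (stmt4_mono hX hu h) (by rw [husu]; exact lt_irrefl _)
    · intro h
      rw [h]
      have hXX : (0 : ℝ) < X * Real.sqrt X := by positivity
      have he : (n : ℝ) * γ * (D / (2 * (X * Real.sqrt X))) = (n : ℝ) * D * c := by
        rw [hγX]
        field_simp
      linarith
end

section
/- Let n ≥ 1 be an integer and let D, c, c' , γ > 0 with c' = c_{n+1} + c_t, and define Φ(r, s) = n(1 − r − s)Dc + n s D c' + nγ/√((1 − r − s)D) + γ/√(s n D) for r ≥ 0, s > 0, r + s < 1. For each s let r*(s) = 1 − (1/D)(γ/(2c))^{2/3} − s. Suppose D is large enough that s* + (1/D)(γ/(2c))^{2/3} ≤ 1, where s* = (1/(nD))·(γ/(2c'))^{2/3}. Then the function s ↦ Φ(r*(s), s), i.e., s ↦ n·(γ/(2c))^{2/3}·c + n s D c' + nγ/√((γ/(2c))^{2/3}) + γ/√(s n D), attains its minimum over {s : 0 < s ≤ 1 − (1/D)(γ/(2c))^{2/3}} at the unique point s = s* = (1/(nD))·(γ/(2(c_{n+1} + c_t)))^{2/3}. -/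
lemma key_aux (a v v₀ : ℝ) (ha : 0 < a) (hv : 0 < v) (hv0 : 0 < v₀) :
    a * v₀^2 + 2*a*v₀^3/v₀ ≤ a * v^2 + 2*a*v₀^3/v ∧
    (a * v^2 + 2*a*v₀^3/v ≤ a * v₀^2 + 2*a*v₀^3/v₀ → v = v₀) := by
  have hdiff : a * v^2 + 2*a*v₀^3/v - (a * v₀^2 + 2*a*v₀^3/v₀)
      = a * (v - v₀)^2 * (v + 2*v₀) / v := by
    field_simp
    ring
  constructor
  · have : 0 ≤ a * (v - v₀)^2 * (v + 2*v₀) / v := by positivity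
    linarith
  · intro h
    have h2 : a * (v - v₀)^2 * (v + 2*v₀) / v ≤ 0 := by linarith
    by_contra hne
    have : 0 < a * (v - v₀)^2 * (v + 2*v₀) / v := by
      have hsq : 0 < (v - v₀)^2 := by
        have : v - v₀ ≠ 0 := sub_ne_zero.mpr hne
        positivity
      have h3 : 0 < v + 2*v₀ := by linarith
      positivity
    linarith

/-- **Optimal offload fraction with nonlinear error costs (part of Theorem 4).**
For the cost `Φ(r,s) = n(1−r−s)Dc + nsDc' + nγ/√((1−r−s)D) + γ/√(snD)` with
`c' = c_{n+1} + c_t`, and the optimal discard fraction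
`r*(s) = 1 − (1/D)(γ/(2c))^{2/3} − s`, if `D` is large enough that
`s* + (1/D)(γ/(2c))^{2/3} ≤ 1` where `s* = (1/(nD))(γ/(2c'))^{2/3}`, then
`s ↦ Φ(r*(s), s)` attains its minimum over
`{s | 0 < s ≤ 1 − (1/D)(γ/(2c))^{2/3}}` at the unique point `s = s*`. -/
theorem stmt_5 (n : ℕ) (hn : 1 ≤ n) (D c c' γ : ℝ)
    (hD : 0 < D) (hc : 0 < c) (hc' : 0 < c') (hγ : 0 < γ)
    (Φ : ℝ → ℝ → ℝ)
    (hΦ : ∀ r s, Φ r s = (n : ℝ) * (1 - r - s) * D * c + (n : ℝ) * s * D * c'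
        + (n : ℝ) * γ / Real.sqrt ((1 - r - s) * D) + γ / Real.sqrt (s * (n : ℝ) * D))
    (rstar : ℝ → ℝ)
    (hrstar : ∀ s, rstar s = 1 - (1 / D) * (γ / (2 * c)) ^ ((2 : ℝ) / 3) - s)
    (sstar : ℝ)
    (hsstar : sstar = (1 / ((n : ℝ) * D)) * (γ / (2 * c')) ^ ((2 : ℝ) / 3))
    (hDlarge : sstar + (1 / D) * (γ / (2 * c)) ^ ((2 : ℝ) / 3) ≤ 1)
    (S : Set ℝ) (hS : S = {s : ℝ | 0 < s ∧ s ≤ 1 - (1 / D) * (γ / (2 * c)) ^ ((2 : ℝ) / 3)}) :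
    sstar ∈ S ∧
    (∀ s ∈ S, Φ (rstar sstar) sstar ≤ Φ (rstar s) s) ∧
    (∀ s ∈ S, Φ (rstar s) s ≤ Φ (rstar sstar) sstar → s = sstar) := by
  have hn' : (0:ℝ) < (n:ℝ) := by exact_mod_cast hn
  have hA : (0:ℝ) < (n:ℝ) * D := by positivity
  -- notation
  set R : ℝ := (1 / D) * (γ / (2 * c)) ^ ((2 : ℝ) / 3) with hR
  have hq : (0:ℝ) < γ / (2 * c') := by positivity
  have hRpos : 0 < R := by
    have : (0:ℝ) < (γ / (2 * c)) ^ ((2 : ℝ) / 3) := Real.rpow_pos_of_pos (by positivity) _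
    positivity
  -- sstar positive
  have hspos : 0 < sstar := by
    rw [hsstar]
    have : (0:ℝ) < (γ / (2 * c')) ^ ((2 : ℝ) / 3) := Real.rpow_pos_of_pos hq _
    positivity
  have hsmem : sstar ∈ S := by
    rw [hS]; exact ⟨hspos, by linarith⟩
  -- sstar * (n*D) = q^(2/3)
  have hsA : sstar * ((n:ℝ) * D) = (γ / (2 * c')) ^ ((2 : ℝ) / 3) := by
    rw [hsstar]; field_simp
  -- v₀ := sqrt (sstar * n * D)
  set v₀ : ℝ := Real.sqrt (sstar * (n:ℝ) * D) with hv₀def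
  have hargs0 : sstar * (n:ℝ) * D = sstar * ((n:ℝ) * D) := by ring
  have hv0pos : 0 < v₀ := Real.sqrt_pos.mpr (by rw [hargs0]; positivity)
  have hv0sq : v₀ ^ 2 = sstar * (n:ℝ) * D := Real.sq_sqrt (by rw [hargs0]; positivity)
  -- γ = 2 c' v₀^3
  have hγ3 : γ = 2 * c' * v₀ ^ 3 := by
    have h1 : v₀ ^ 2 = (γ / (2 * c')) ^ ((2 : ℝ) / 3) := by
      rw [hv0sq, hargs0, hsA]
    have h2 : ((γ / (2 * c')) ^ ((2 : ℝ) / 3)) ^ (3:ℕ) = (γ / (2 * c')) ^ (2:ℕ) := by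
      rw [← Real.rpow_natCast ((γ / (2 * c')) ^ ((2 : ℝ) / 3)) 3, ← Real.rpow_mul hq.le,
        ← Real.rpow_natCast (γ / (2 * c')) 2]
      norm_num
    have h6 : (v₀ ^ 3) ^ 2 = (γ / (2 * c')) ^ 2 := by
      have : (v₀ ^ 2) ^ 3 = (γ / (2 * c')) ^ 2 := by rw [h1]; exact_mod_cast h2
      nlinarith [this]
    have hv3 : 0 < v₀ ^ 3 := by positivity
    have : v₀ ^ 3 = γ / (2 * c') := by nlinarith [h6, hv3, hq]
    field_simp at this
    linarith
  -- rewrite Φ along rstar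
  have hconst : ∀ s : ℝ, 1 - rstar s - s = R := by
    intro s; rw [hrstar]; ring
  have hΦr : ∀ s : ℝ, Φ (rstar s) s
      = (n:ℝ) * R * D * c + (n:ℝ) * γ / Real.sqrt (R * D)
        + ((n:ℝ) * s * D * c' + γ / Real.sqrt (s * (n:ℝ) * D)) := by
    intro s
    rw [hΦ, hconst]
    ring
  -- reduce to the key inequality
  have hkey : ∀ s : ℝ, 0 < s →
      ((n:ℝ) * sstar * D * c' + γ / Real.sqrt (sstar * (n:ℝ) * D)
        ≤ (n:ℝ) * s * D * c' + γ / Real.sqrt (s * (n:ℝ) * D)) ∧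
      ((n:ℝ) * s * D * c' + γ / Real.sqrt (s * (n:ℝ) * D)
        ≤ (n:ℝ) * sstar * D * c' + γ / Real.sqrt (sstar * (n:ℝ) * D) → s = sstar) := by
    intro s hs
    set v : ℝ := Real.sqrt (s * (n:ℝ) * D) with hvdef
    have hargs : s * (n:ℝ) * D = s * ((n:ℝ) * D) := by ring
    have hvpos : 0 < v := Real.sqrt_pos.mpr (by rw [hargs]; positivity)
    have hvsq : v ^ 2 = s * (n:ℝ) * D := Real.sq_sqrt (by rw [hargs]; positivity)
    obtain ⟨hle, heq⟩ := key_aux c' v v₀ hc' hvpos hv0pos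
    have e1 : (n:ℝ) * s * D * c' = c' * v ^ 2 := by rw [hvsq]; ring
    have e2 : (n:ℝ) * sstar * D * c' = c' * v₀ ^ 2 := by rw [hv0sq]; ring
    have e3 : γ / v = 2 * c' * v₀ ^ 3 / v := by rw [hγ3]
    have e4 : γ / v₀ = 2 * c' * v₀ ^ 3 / v₀ := by rw [hγ3]
    constructor
    · rw [e1, e2, ← hv₀def, e3, e4]; linarith
    · rw [e1, e2, ← hv₀def, e3, e4]
      intro h
      have hv : v = v₀ := heq (by linarith)
      have : s * (n:ℝ) * D = sstar * (n:ℝ) * D := by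
        rw [← hvsq, ← hv0sq, hv]
      have hnd : (n:ℝ) * D ≠ 0 := ne_of_gt hA
      field_simp at this
      exact this
  refine ⟨hsmem, ?_, ?_⟩
  · intro s hsS
    rw [hS] at hsS
    obtain ⟨hs1, _⟩ := hsS
    rw [hΦr, hΦr]
    have := (hkey s hs1).1
    linarith
  · intro s hsS hle
    rw [hS] at hsS
    obtain ⟨hs1, _⟩ := hsS
    rw [hΦr, hΦr] at hle
    exact (hkey s hs1).2 (by linarith)
end

section
/- Let C > 0 and let k ≥ 1 be an integer. Then the iterated integral ∫₀^C ( ∫₀^{c} (k(c − y)/C²)·((C − y)/C)^{k−1} dy ) dc equals C/2 − C(−1)^k/(k + 2) − Σ_{l=0}^{k−1} binom(k, l) · C(−1)^l (k + 3)/((l + 2)(l + 3)). -/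
open intervalIntegral

lemma Jint (a b d : ℝ) (n : ℕ) :
    ∫ y in a..b, (d - y)^n = ((d-a)^(n+1) - (d-b)^(n+1))/((n:ℝ)+1) := by
  rw [show (fun y => (d - y)^n) = fun y => ((·^n) (d - y)) from rfl]
  rw [intervalIntegral.integral_comp_sub_left (·^n) d, integral_pow]

lemma inner_eq (C c : ℝ) (hC : C ≠ 0) (m : ℕ) :
    (∫ y in (0:ℝ)..c, (((m:ℝ)+1) * (c - y) / C ^ 2) * (((C - y) / C) ^ m))
    = c/C - 1/((m:ℝ)+2) + (C-c)^(m+2)/((((m:ℝ)+2))*C^(m+2)) := by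
  have hint : ∀ y : ℝ, (((m:ℝ)+1) * (c - y) / C ^ 2) * (((C - y) / C) ^ m)
      = (((m:ℝ)+1)/C^(m+2)) * ((c - C) * (C - y)^m + (C - y)^(m+1)) := by
    intro y
    rw [div_pow]
    field_simp
    ring
  simp only [hint]
  rw [intervalIntegral.integral_const_mul,
    intervalIntegral.integral_add
      ((Continuous.intervalIntegrable (by continuity : Continuous fun y : ℝ => (c - C) * (C - y)^m)) _ _)
      ((Continuous.intervalIntegrable (by continuity : Continuous fun y : ℝ => (C - y)^(m+1))) _ _),
    intervalIntegral.integral_const_mul, Jint, Jint]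
  have h1 : C^(m+2) ≠ 0 := pow_ne_zero _ hC
  have h2 : (m:ℝ)+1 ≠ 0 := by positivity
  have h3 : (m:ℝ)+2 ≠ 0 := by positivity
  field_simp
  push_cast
  ring


lemma outer_eq (C : ℝ) (hC : C ≠ 0) (m : ℕ) :
    (∫ c in (0:ℝ)..C, (c/C - 1/((m:ℝ)+2) + (C-c)^(m+2)/((((m:ℝ)+2))*C^(m+2))))
    = C/2 - C/((m:ℝ)+3) := by
  rw [intervalIntegral.integral_add
      (((by continuity : Continuous fun c:ℝ => c/C - 1/((m:ℝ)+2))).intervalIntegrable _ _)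
      (((by continuity : Continuous fun c:ℝ => (C-c)^(m+2)/((((m:ℝ)+2))*C^(m+2)))).intervalIntegrable _ _),
    intervalIntegral.integral_sub
      (((by continuity : Continuous fun c:ℝ => c/C)).intervalIntegrable _ _)
      (intervalIntegrable_const),
    intervalIntegral.integral_div]
  simp only [intervalIntegral.integral_div]
  rw [integral_id, integral_const, Jint]
  have h1 : C^(m+2) ≠ 0 := pow_ne_zero _ hC
  have h2 : (m:ℝ)+2 ≠ 0 := by positivity
  have h3 : (m:ℝ)+3 ≠ 0 := by positivity
  field_simp
  push_cast
  ring

lemma key_sum (k : ℕ) :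
    ∑ l ∈ Finset.range (k+1), (k.choose l : ℝ) * (-1)^l / (((l:ℝ)+2)*((l:ℝ)+3))
      = 1/(((k:ℝ)+2)*((k:ℝ)+3)) := by
  have hterm : ∀ l ∈ Finset.range (k+1),
      (k.choose l : ℝ) * (-1)^l / (((l:ℝ)+2)*((l:ℝ)+3))
      = ∫ x in (0:ℝ)..1, (-x)^l * (1:ℝ)^(k-l) * (k.choose l : ℝ) * (x * (1 - x)) := by
    intro l _
    have hpt : ∀ x:ℝ, (-x)^l * (1:ℝ)^(k-l) * (k.choose l:ℝ) * (x*(1-x))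
        = ((-1)^l * (k.choose l:ℝ)) * (x^(l+1) - x^(l+2)) := by
      intro x; rw [neg_pow]; ring
    simp only [hpt]
    rw [intervalIntegral.integral_const_mul, intervalIntegral.integral_sub
        ((continuous_pow _).intervalIntegrable _ _) ((continuous_pow _).intervalIntegrable _ _),
      integral_pow, integral_pow]
    have h2 : (l:ℝ)+2 ≠ 0 := by positivity
    have h3 : (l:ℝ)+3 ≠ 0 := by positivity
    push_cast
    field_simp
    ring
  rw [Finset.sum_congr rfl hterm, ← intervalIntegral.integral_finset_sum
      (fun l _ => ((by continuity : Continuous fun x:ℝ => (-x)^l * (1:ℝ)^(k-l) * (k.choose l:ℝ) * (x*(1-x)))).intervalIntegrable _ _)]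
  have hsum : ∀ x:ℝ, ∑ l ∈ Finset.range (k+1), (-x)^l * (1:ℝ)^(k-l) * (k.choose l:ℝ) * (x*(1-x))
      = (1-x)^(k+1) - (1-x)^(k+2) := by
    intro x
    rw [← Finset.sum_mul, ← add_pow, show (-x:ℝ)+1 = 1-x by ring]
    ring
  simp only [hsum]
  rw [intervalIntegral.integral_sub
      (((by continuity : Continuous fun x:ℝ => (1-x)^(k+1))).intervalIntegrable _ _)
      (((by continuity : Continuous fun x:ℝ => (1-x)^(k+2))).intervalIntegrable _ _),
    Jint, Jint]
  have h2 : (k:ℝ)+2 ≠ 0 := by positivity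
  have h3 : (k:ℝ)+3 ≠ 0 := by positivity
  push_cast
  norm_num
  field_simp
  ring

/-- **Closed form of the double integral in the proof of Theorem 5.**
`∫₀^C ∫₀^c (k(c−y)/C²)((C−y)/C)^{k−1} dy dc
  = C/2 − C(−1)^k/(k+2) − ∑_{l=0}^{k−1} C(k choose l)(−1)^l(k+3)/((l+2)(l+3))`. -/
theorem stmt_6 (C : ℝ) (hC : 0 < C) (k : ℕ) (hk : 1 ≤ k) :
    (∫ c in (0 : ℝ)..C, ∫ y in (0 : ℝ)..c,
        ((k : ℝ) * (c - y) / C ^ 2) * (((C - y) / C) ^ (k - 1)))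
      = C / 2 - C * (-1 : ℝ) ^ k / ((k : ℝ) + 2)
        - ∑ l ∈ Finset.range k,
            (k.choose l : ℝ) * (C * (-1 : ℝ) ^ l * ((k : ℝ) + 3))
              / (((l : ℝ) + 2) * ((l : ℝ) + 3)) := by
  obtain ⟨m, rfl⟩ : ∃ m, k = m + 1 := ⟨k - 1, (Nat.succ_pred_eq_of_pos hk).symm⟩
  have hC0 : C ≠ 0 := hC.ne'
  simp only [Nat.add_sub_cancel, Nat.cast_add, Nat.cast_one]
  have hin : ∀ c : ℝ, (∫ y in (0:ℝ)..c, (((m:ℝ)+1) * (c - y) / C ^ 2) * (((C - y) / C) ^ m))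
      = c/C - 1/((m:ℝ)+2) + (C-c)^(m+2)/((((m:ℝ)+2))*C^(m+2)) := fun c => inner_eq C c hC0 m
  simp only [hin]
  rw [outer_eq C hC0 m]
  have hs := key_sum (m+1)
  rw [Finset.sum_range_succ] at hs
  simp only [Nat.choose_self, Nat.cast_one, Nat.cast_add] at hs
  have hfac : ∑ l ∈ Finset.range (m+1),
        ((m+1).choose l : ℝ) * (C * (-1)^l * (((m:ℝ)+1) + 3)) / (((l:ℝ)+2)*((l:ℝ)+3))
      = C * (((m:ℝ)+1) + 3) * ∑ l ∈ Finset.range (m+1),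
        ((m+1).choose l : ℝ) * (-1)^l / (((l:ℝ)+2)*((l:ℝ)+3)) := by
    rw [Finset.mul_sum]
    exact Finset.sum_congr rfl fun l _ => by ring
  rw [hfac]
  have hS : ∑ l ∈ Finset.range (m+1), ((m+1).choose l : ℝ) * (-1)^l / (((l:ℝ)+2)*((l:ℝ)+3))
      = 1/((((m:ℝ)+1)+2)*(((m:ℝ)+1)+3)) - (-1)^(m+1)/((((m:ℝ)+1)+2)*(((m:ℝ)+1)+3)) := by
    linear_combination hs
  rw [hS]
  have h3 : (m:ℝ)+3 ≠ 0 := by positivity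
  have h4 : (m:ℝ)+4 ≠ 0 := by positivity
  field_simp
  ring
end
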